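/- Let 1 < q < 2, p > 4, A > 0, B ≥ 0, D > 0, and define s(t) = A t^{2−q} + B t^{4−q} − D t^{p−q} for t > 0 and, for F ∈ ℝ, φ_F(t) = (A/2)t² + (B/4)t⁴ − (F/q)t^q − (D/p)t^p for t ≥ 0. Let t_max be the unique maximizer of s on (0,∞). If 0 < F < s(t_max), then the equation s(t) = F has exactly two solutions t⁺ and t⁻ in (0,∞), with 0 < t⁺ < t_max < t⁻; φ_F is strictly decreasing on (0, t⁺), strictly increasing on (t⁺, t⁻) and strictly decreasing on (t⁻, ∞); φ_F(t⁺) = inf_{0 ≤ t ≤ t_max} φ_F(t); and φ_F(t⁻) = sup_{t ≥ t⁺} φ_F(t). -/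

import Mathlib

/-!
On `(0, ∞)` one has `s'(t) = t^{p-q-1} h(t)` with
`h(t) = (2-q)A t^{2-p} + (4-q)B t^{4-p} - (p-q)D` strictly decreasing, so `s` has at most
one critical point; the maximiser `t_max` is one, hence `s` increases on `(0, t_max]` and decreases
on `[t_max, ∞)`. Since `s(0) = 0 < F < s(t_max)` and `s → -∞`, the level `F` is crossed exactly
once on each side of `t_max`. Finally `φ_F'(t) = t^{q-1}(s(t) - F)`, so the monotonicity of
`φ_F` follows the sign of `s - F`.
-/

open Set

/-- The fibering auxiliary function `s(t) = A t^{2-q} + B t^{4-q} - D t^{p-q}`. -/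
noncomputable def sFib (q p A B D t : ℝ) : ℝ :=
  A * t ^ (2 - q) + B * t ^ (4 - q) - D * t ^ (p - q)

/-- The fibering map `φ_F(t) = (A/2)t² + (B/4)t⁴ - (F/q)t^q - (D/p)t^p`. -/
noncomputable def phiFib (q p A B D F t : ℝ) : ℝ :=
  A / 2 * t ^ (2 : ℝ) + B / 4 * t ^ (4 : ℝ) - F / q * t ^ q - D / p * t ^ p

open Filter Topology

noncomputable def hFib (q p A B D t : ℝ) : ℝ :=
  (2 - q) * A * t ^ (2 - p) + (4 - q) * B * t ^ (4 - p) - (p - q) * D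

theorem exists_two_roots_of_unimodal {f : ℝ → ℝ} {m F : ℝ} (hm : 0 ≤ m)
    (hf : ContinuousOn f (Ici 0))
    (hmono : StrictMonoOn f (Ioc 0 m)) (hanti : StrictAntiOn f (Ici m))
    (htop : Tendsto f atTop atBot) (hf0 : f 0 < F) (hFm : F < f m) :
    ∃ a b, 0 < a ∧ a < m ∧ m < b ∧ f a = F ∧ f b = F ∧
      (∀ t, 0 < t → f t = F → t = a ∨ t = b) ∧
      (∀ t ∈ Ioo 0 a, f t < F) ∧ (∀ t ∈ Ioo a b, F < f t) ∧ (∀ t ∈ Ioi b, f t < F) := by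
  obtain ⟨a, ⟨ha0, ham⟩, hfa⟩ :=
    intermediate_value_Icc hm (hf.mono Icc_subset_Ici_self) ⟨hf0.le, hFm.le⟩
  have ha0 : 0 < a := ha0.lt_of_ne (by rintro rfl; linarith)
  have ham : a < m := ham.lt_of_ne (by rintro rfl; linarith)
  obtain ⟨c, hfc, hmc⟩ :=
    ((htop.eventually (eventually_lt_atBot F)).and (eventually_gt_atTop m)).exists
  obtain ⟨b, ⟨hmb, -⟩, hfb⟩ := intermediate_value_Icc' hmc.le
    (hf.mono fun t ht => hm.trans ht.1) ⟨hfc.le, hFm.le⟩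
  have hmb : m < b := hmb.lt_of_ne (by rintro rfl; linarith)
  refine ⟨a, b, ha0, ham, hmb, hfa, hfb, fun t ht hft => ?_, fun t ht => ?_, fun t ht => ?_,
    fun t ht => ?_⟩
  · rcases le_or_gt t m with htm | htm
    · exact .inl (hmono.injOn ⟨ht, htm⟩ ⟨ha0, ham.le⟩ (hft.trans hfa.symm))
    · exact .inr (hanti.injOn htm.le hmb.le (hft.trans hfb.symm))
  · exact hfa ▸ hmono ⟨ht.1, (ht.2.trans ham).le⟩ ⟨ha0, ham.le⟩ ht.2
  · rcases le_or_gt t m with htm | htm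
    · exact hfa ▸ hmono ⟨ha0, ham.le⟩ ⟨ha0.trans ht.1, htm⟩ ht.1
    · exact hfb ▸ hanti htm.le hmb.le ht.2
  · exact hfb ▸ hanti hmb.le (hmb.trans ht).le ht

section Fibering

variable {q p A B D F t : ℝ}

theorem continuous_sFib (hq2 : q ≤ 2) (hqp : q ≤ p) : Continuous (sFib q p A B D) := by
  unfold sFib
  have := Real.continuous_rpow_const (q := 2 - q) (by linarith)
  have := Real.continuous_rpow_const (q := 4 - q) (by linarith)
  have := Real.continuous_rpow_const (q := p - q) (by linarith)
  fun_prop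

theorem sFib_zero (hq2 : q < 2) (hqp : q < p) : sFib q p A B D 0 = 0 := by
  simp [sFib, Real.zero_rpow, (by linarith : 2 - q ≠ 0), (by linarith : 4 - q ≠ 0),
    (by linarith : p - q ≠ 0)]

theorem hasDerivAt_sFib (ht : 0 < t) :
    HasDerivAt (sFib q p A B D) (t ^ (p - q - 1) * hFib q p A B D t) t := by
  have H := (((Real.hasDerivAt_rpow_const (p := 2 - q) (Or.inl ht.ne')).const_mul A).add
    ((Real.hasDerivAt_rpow_const (p := 4 - q) (Or.inl ht.ne')).const_mul B)).sub
    ((Real.hasDerivAt_rpow_const (p := p - q) (Or.inl ht.ne')).const_mul D)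
  have hpow : ∀ r, t ^ (p - q - 1) * t ^ (r - p) = t ^ (r - q - 1) := fun r => by
    rw [← Real.rpow_add ht]; ring_nf
  refine H.congr_deriv ?_
  simp only [hFib, mul_sub, mul_add, mul_left_comm (t ^ (p - q - 1)), hpow]
  ring

theorem hFib_strictAntiOn (hq2 : q < 2) (hp : 4 < p) (hA : 0 < A) (hB : 0 ≤ B) :
    StrictAntiOn (hFib q p A B D) (Ioi 0) := by
  intro x hx y _ hxy
  have h2 : y ^ (2 - p) < x ^ (2 - p) := Real.rpow_lt_rpow_of_neg hx hxy (by linarith)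
  have h4 : y ^ (4 - p) ≤ x ^ (4 - p) := Real.rpow_le_rpow_of_nonpos hx hxy.le (by linarith)
  have c2 : 0 < (2 - q) * A := mul_pos (by linarith) hA
  have c4 : 0 ≤ (4 - q) * B := mul_nonneg (by linarith) hB
  unfold hFib
  nlinarith [mul_lt_mul_of_pos_left h2 c2, mul_le_mul_of_nonneg_left h4 c4]

theorem hFib_eq_zero_of_isLocalMax (ht : 0 < t) (hmax : IsLocalMax (sFib q p A B D) t) :
    hFib q p A B D t = 0 := by
  have := hmax.hasDerivAt_eq_zero (hasDerivAt_sFib ht)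
  exact (mul_eq_zero.1 this).resolve_left (Real.rpow_pos_of_pos ht _).ne'

theorem strictMonoOn_sFib_of_hFib_eq_zero (hq2 : q < 2) (hp : 4 < p) (hA : 0 < A)
    (hB : 0 ≤ B) (ht : 0 < t) (hcrit : hFib q p A B D t = 0) :
    StrictMonoOn (sFib q p A B D) (Ioc 0 t) := by
  refine strictMonoOn_of_deriv_pos (convex_Ioc 0 t)
    (continuous_sFib hq2.le (by linarith)).continuousOn fun x hx => ?_
  rw [interior_Ioc] at hx
  rw [(hasDerivAt_sFib hx.1).deriv]
  exact mul_pos (Real.rpow_pos_of_pos hx.1 _)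
    (hcrit ▸ hFib_strictAntiOn hq2 hp hA hB hx.1 ht hx.2)

theorem strictAntiOn_sFib_of_hFib_eq_zero (hq2 : q < 2) (hp : 4 < p) (hA : 0 < A)
    (hB : 0 ≤ B) (ht : 0 < t) (hcrit : hFib q p A B D t = 0) :
    StrictAntiOn (sFib q p A B D) (Ici t) := by
  refine strictAntiOn_of_deriv_neg (convex_Ici t)
    (continuous_sFib hq2.le (by linarith)).continuousOn fun x hx => ?_
  rw [interior_Ici] at hx
  have hx0 : 0 < x := ht.trans hx
  rw [(hasDerivAt_sFib hx0).deriv]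
  exact mul_neg_of_pos_of_neg (Real.rpow_pos_of_pos hx0 _)
    (hcrit ▸ hFib_strictAntiOn hq2 hp hA hB ht hx0 hx)

theorem tendsto_sFib_atTop (hqp : q < p) (hp : 4 < p) (hD : 0 < D) :
    Tendsto (sFib q p A B D) atTop atBot := by
  have hneg : ∀ {r}, r < p → Tendsto (fun u : ℝ => u ^ (r - p)) atTop (𝓝 0) := fun hr => by
    simpa using tendsto_rpow_neg_atTop (y := p - _) (by linarith [hr])
  have hlim : Tendsto (fun u : ℝ => A * u ^ (2 - p) + B * u ^ (4 - p) - D) atTop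
      (𝓝 (A * 0 + B * 0 - D)) :=
    (((hneg (by linarith)).const_mul A).add ((hneg hp).const_mul B)).sub_const D
  refine ((tendsto_rpow_atTop (by linarith : 0 < p - q)).atTop_mul_neg (by linarith)
    hlim).congr' ?_
  filter_upwards [eventually_gt_atTop 0] with u hu
  have hpow : ∀ r, u ^ (p - q) * u ^ (r - p) = u ^ (r - q) := fun r => by
    rw [← Real.rpow_add hu]; ring_nf
  simp only [sFib, mul_sub, mul_add, mul_left_comm (u ^ (p - q)), hpow]
  ring

theorem continuous_phiFib (hq : 0 ≤ q) (hp : 0 ≤ p) : Continuous (phiFib q p A B D F) := by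
  unfold phiFib
  have := Real.continuous_rpow_const (q := 2) (by norm_num)
  have := Real.continuous_rpow_const (q := 4) (by norm_num)
  have := Real.continuous_rpow_const hq
  have := Real.continuous_rpow_const hp
  fun_prop

theorem hasDerivAt_phiFib (hq : q ≠ 0) (hp : p ≠ 0) (ht : 0 < t) :
    HasDerivAt (phiFib q p A B D F) (t ^ (q - 1) * (sFib q p A B D t - F)) t := by
  have H := ((((Real.hasDerivAt_rpow_const (p := 2) (Or.inl ht.ne')).const_mul (A / 2)).add
    ((Real.hasDerivAt_rpow_const (p := 4) (Or.inl ht.ne')).const_mul (B / 4))).sub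
    ((Real.hasDerivAt_rpow_const (p := q) (Or.inl ht.ne')).const_mul (F / q))).sub
    ((Real.hasDerivAt_rpow_const (p := p) (Or.inl ht.ne')).const_mul (D / p))
  have hpow : ∀ r, t ^ (q - 1) * t ^ (r - q) = t ^ (r - 1) := fun r => by
    rw [← Real.rpow_add ht]; ring_nf
  refine H.congr_deriv ?_
  simp only [sFib, mul_sub, mul_add, mul_left_comm (t ^ (q - 1)), hpow]
  field_simp
  ring

theorem strictAntiOn_phiFib (hq : 0 < q) (hp : 0 < p) {S : Set ℝ} (hS : Convex ℝ S)
    (hS0 : S ⊆ Ici 0) (hsF : ∀ t ∈ interior S, sFib q p A B D t < F) :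
    StrictAntiOn (phiFib q p A B D F) S := by
  refine strictAntiOn_of_deriv_neg hS (continuous_phiFib hq.le hp.le).continuousOn
    fun x hx => ?_
  have hx0 : 0 < x := by simpa using interior_mono hS0 hx
  rw [(hasDerivAt_phiFib hq.ne' hp.ne' hx0).deriv]
  exact mul_neg_of_pos_of_neg (Real.rpow_pos_of_pos hx0 _) (sub_neg.2 (hsF x hx))

theorem strictMonoOn_phiFib (hq : 0 < q) (hp : 0 < p) {S : Set ℝ} (hS : Convex ℝ S)
    (hS0 : S ⊆ Ici 0) (hsF : ∀ t ∈ interior S, F < sFib q p A B D t) :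
    StrictMonoOn (phiFib q p A B D F) S := by
  refine strictMonoOn_of_deriv_pos hS (continuous_phiFib hq.le hp.le).continuousOn
    fun x hx => ?_
  have hx0 : 0 < x := by simpa using interior_mono hS0 hx
  rw [(hasDerivAt_phiFib hq.ne' hp.ne' hx0).deriv]
  exact mul_pos (Real.rpow_pos_of_pos hx0 _) (sub_pos.2 (hsF x hx))

end Fibering

/-- Lemma 2.9(ii) of the paper: for `0 < F < s(t_max)`, the equation `s(t) = F` has exactly
two solutions `0 < t⁺ < t_max < t⁻`; `φ_F` is strictly decreasing on `(0, t⁺)`, strictly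
increasing on `(t⁺, t⁻)` and strictly decreasing on `(t⁻, ∞)`; `φ_F(t⁺)` is the infimum of
`φ_F` on `[0, t_max]` and `φ_F(t⁻)` is the supremum of `φ_F` on `[t⁺, ∞)`. -/
theorem phiFib_shape_of_pos (q p A B D F : ℝ) (hq1 : 1 < q) (hq2 : q < 2) (hp : 4 < p)
    (hA : 0 < A) (hB : 0 ≤ B) (hD : 0 < D)
    (tmax : ℝ) (htmax : 0 < tmax)
    (hmax : ∀ t, 0 < t → t ≠ tmax → sFib q p A B D t < sFib q p A B D tmax)
    (hF0 : 0 < F) (hFs : F < sFib q p A B D tmax) :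
    ∃ tp tm : ℝ, 0 < tp ∧ tp < tmax ∧ tmax < tm ∧
      sFib q p A B D tp = F ∧ sFib q p A B D tm = F ∧
      (∀ t, 0 < t → sFib q p A B D t = F → t = tp ∨ t = tm) ∧
      StrictAntiOn (phiFib q p A B D F) (Ioo 0 tp) ∧
      StrictMonoOn (phiFib q p A B D F) (Ioo tp tm) ∧
      StrictAntiOn (phiFib q p A B D F) (Ioi tm) ∧
      (∀ t, 0 ≤ t → t ≤ tmax → phiFib q p A B D F tp ≤ phiFib q p A B D F t) ∧
      (∀ t, tp ≤ t → phiFib q p A B D F t ≤ phiFib q p A B D F tm) := by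
  have hq : 0 < q := by linarith
  have hp0 : 0 < p := by linarith
  have hlocmax : IsLocalMax (sFib q p A B D) tmax := by
    filter_upwards [Ioi_mem_nhds htmax] with t ht
    rcases eq_or_ne t tmax with rfl | hne
    · exact le_rfl
    · exact (hmax t ht hne).le
  have hcrit := hFib_eq_zero_of_isLocalMax htmax hlocmax
  obtain ⟨tp, tm, htp, htpmax, htmaxm, hstp, hstm, huniq, hlt₁, hgt, hlt₂⟩ :=
    exists_two_roots_of_unimodal htmax.le (continuous_sFib hq2.le (by linarith)).continuousOn
      (strictMonoOn_sFib_of_hFib_eq_zero hq2 hp hA hB htmax hcrit)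
      (strictAntiOn_sFib_of_hFib_eq_zero hq2 hp hA hB htmax hcrit)
      (tendsto_sFib_atTop (by linarith) hp hD) (by rwa [sFib_zero hq2 (by linarith)]) hFs
  have htptm : tp < tm := htpmax.trans htmaxm
  have hφ₁ := strictAntiOn_phiFib hq hp0 (convex_Icc 0 tp) Icc_subset_Ici_self
    (by simpa only [interior_Icc] using hlt₁)
  have hφ₂ := strictMonoOn_phiFib hq hp0 (convex_Icc tp tm) (fun t ht => htp.le.trans ht.1)
    (by simpa only [interior_Icc] using hgt)
  have hφ₃ := strictAntiOn_phiFib hq hp0 (convex_Ici tm)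
    (fun t ht => (htp.trans htptm).le.trans ht)
    (by simpa only [interior_Ici] using hlt₂)
  refine ⟨tp, tm, htp, htpmax, htmaxm, hstp, hstm, huniq, hφ₁.mono Ioo_subset_Icc_self,
    hφ₂.mono Ioo_subset_Icc_self, hφ₃.mono Ioi_subset_Ici_self, fun t ht0 ht => ?_,
    fun t ht => ?_⟩
  · rcases le_total t tp with h | h
    · exact hφ₁.antitoneOn ⟨ht0, h⟩ ⟨htp.le, le_rfl⟩ h
    · exact hφ₂.monotoneOn ⟨le_rfl, htptm.le⟩ ⟨h, ht.trans htmaxm.le⟩ h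
  · rcases le_total t tm with h | h
    · exact hφ₂.monotoneOn ⟨ht, h⟩ ⟨htptm.le, le_rfl⟩ h
    · exact hφ₃.antitoneOn (le_refl tm) h h
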